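/- arXiv:2505.05809 — 7 statements merged into one kernel-verified Lean document; each statement's English description precedes it below -/
import Mathlib

section
/- In the fair division instance with 3 agents and 4 goods where agent 1 values the goods (1.4, 2.2, 2.2, 2.2) and agents 2 and 3 each value them (5, 1, 1, 1), every EQ1 allocation assigns exactly one good to agent 1. -/
open Finset

/-- An allocation is a partition of the goods among the agents. -/
def isPartition {ι γ : Type*} [Fintype ι] [Fintype γ] [DecidableEq γ]
    (A : ι → Finset γ) : Prop :=
  (∀ i j, i ≠ j → Disjoint (A i) (A j)) ∧ Finset.univ.biUnion A = Finset.univ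

/-- Additive value of a bundle. -/
def bundleVal {γ : Type*} (v : γ → ℚ) (S : Finset γ) : ℚ := ∑ g ∈ S, v g

/-- EQ1: for every pair of agents `i, j` with `A i` nonempty, some good can be
removed from `A i` so that `i`'s value drops to at most `j`'s value. -/
def EQ1 {ι γ : Type*} [DecidableEq γ] (v : ι → γ → ℚ) (A : ι → Finset γ) : Prop :=
  ∀ i j, A i ≠ ∅ → ∃ g ∈ A i, bundleVal (v i) ((A i).erase g) ≤ bundleVal (v j) (A j)

/-- The instance of Theorem 3.1 (Fig. 1). -/
def vFig1 : Fin 3 → Fin 4 → ℚ :=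
  ![![7/5, 11/5, 11/5, 11/5], ![5, 1, 1, 1], ![5, 1, 1, 1]]

/-
Agents 1, 2, 3 are `0, 1, 2` here. If agent 1 gets nothing, EQ1 towards agent 1 lets every other
agent hold at most one good, so at most two goods are allocated. If agent 1 gets at least two
goods, then after removing any one of them she still has value at least 7/5, so agents 2 and 3
must each have value above 1 while sharing at most two goods. The one of them without the
5-valued good needs two goods, and the other needs at least one: three goods in total.
-/

section Bundles

variable {γ : Type*}

theorem bundleVal_empty (v : γ → ℚ) : bundleVal v ∅ = 0 := sum_empty

theorem nonempty_of_bundleVal_pos {v : γ → ℚ} {S : Finset γ} (h : 0 < bundleVal v S) :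
    S.Nonempty :=
  nonempty_iff_ne_empty.2 fun hS => by simp [hS, bundleVal_empty] at h

theorem bundleVal_eq_card {v : γ → ℚ} {S : Finset γ} (hv : ∀ g ∈ S, v g = 1) :
    bundleVal v S = S.card := by
  rw [bundleVal, sum_congr rfl hv, sum_const, nsmul_one]

theorem card_nsmul_le_bundleVal {v : γ → ℚ} {S : Finset γ} {c : ℚ} (hv : ∀ g ∈ S, c ≤ v g) :
    S.card • c ≤ bundleVal v S :=
  card_nsmul_le_sum S v c hv

theorem eq_empty_of_bundleVal_nonpos {v : γ → ℚ} {S : Finset γ} (hv : ∀ g ∈ S, 0 < v g)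
    (h : bundleVal v S ≤ 0) : S = ∅ := by
  by_contra hS
  exact (sum_pos hv (nonempty_iff_ne_empty.2 hS)).not_ge h

theorem three_le_card_add_card [DecidableEq γ] {u : γ → ℚ} {g₀ : γ}
    (hu : ∀ g ≠ g₀, u g = 1) {S T : Finset γ} (hST : Disjoint S T)
    (hS : 1 < bundleVal u S) (hT : 1 < bundleVal u T) : 3 ≤ S.card + T.card := by
  have two_le_card : ∀ R : Finset γ, g₀ ∉ R → 1 < bundleVal u R → 2 ≤ R.card := by
    intro R hR h
    rw [bundleVal_eq_card fun g hg => hu g (ne_of_mem_of_not_mem hg hR)] at h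
    exact_mod_cast h
  have one_le_card : ∀ R : Finset γ, 1 < bundleVal u R → 1 ≤ R.card := fun R h =>
    card_pos.2 (nonempty_of_bundleVal_pos (one_pos.trans h))
  by_cases hg₀ : g₀ ∈ S
  · have := two_le_card T (disjoint_left.1 hST hg₀) hT
    have := one_le_card S hS
    omega
  · have := two_le_card S hg₀ hS
    have := one_le_card T hT
    omega

end Bundles

section Allocations

variable {ι γ : Type*}

theorem isPartition.sum_card [Fintype ι] [Fintype γ] [DecidableEq γ] {A : ι → Finset γ}
    (hA : isPartition A) : ∑ i, (A i).card = Fintype.card γ := by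
  rw [← card_univ, ← hA.2, card_biUnion fun i _ j _ hij => hA.1 i j hij]

variable [DecidableEq γ] {v : ι → γ → ℚ} {A : ι → Finset γ}

theorem EQ1.card_le_one_of_eq_empty (hA : EQ1 v A) {i j : ι} (hi : A i = ∅)
    (hv : ∀ g, 0 < v j g) : (A j).card ≤ 1 := by
  by_cases hj : A j = ∅
  · simp [hj]
  obtain ⟨g, hg, hle⟩ := hA j i hj
  rw [hi, bundleVal_empty] at hle
  have herase := eq_empty_of_bundleVal_nonpos (fun g _ => hv g) hle
  have := card_erase_of_mem hg
  rw [herase, card_empty] at this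
  omega

theorem EQ1.le_bundleVal_of_two_le_card (hA : EQ1 v A) {i : ι} (j : ι) {c : ℚ} (hc : 0 ≤ c)
    (hv : ∀ g, c ≤ v i g) (hi : 2 ≤ (A i).card) : c ≤ bundleVal (v j) (A j) := by
  obtain ⟨g, hg, hle⟩ := hA i j (by rintro h; simp [h] at hi)
  have hcard : 1 ≤ ((A i).erase g).card := by rw [card_erase_of_mem hg]; omega
  calc c = 1 • c := (one_nsmul c).symm
    _ ≤ ((A i).erase g).card • c := nsmul_le_nsmul_left hc hcard
    _ ≤ bundleVal (v i) ((A i).erase g) := card_nsmul_le_bundleVal fun g _ => hv g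
    _ ≤ bundleVal (v j) (A j) := hle

end Allocations

theorem vFig1_zero_ge (g : Fin 4) : 7 / 5 ≤ vFig1 0 g := by
  fin_cases g <;> norm_num [vFig1]

theorem vFig1_pos {j : Fin 3} (hj : j ≠ 0) (g : Fin 4) : 0 < vFig1 j g := by
  fin_cases j <;> fin_cases g <;> simp_all [vFig1]

theorem vFig1_eq_one {j : Fin 3} (hj : j ≠ 0) (g : Fin 4) (hg : g ≠ 0) : vFig1 j g = 1 := by
  fin_cases j <;> fin_cases g <;> simp_all [vFig1]

/-- in the instance of Fig. 1, every EQ1 allocation assigns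
exactly one good to agent 1. -/
theorem stmt0 (A : Fin 3 → Finset (Fin 4)) (hpart : isPartition A)
    (heq1 : EQ1 vFig1 A) : (A 0).card = 1 := by
  have htotal : (A 0).card + (A 1).card + (A 2).card = 4 := by
    simpa [Fin.sum_univ_three] using hpart.sum_card
  rcases Nat.lt_trichotomy (A 0).card 1 with hlt | heq | hgt
  · have h0 : A 0 = ∅ := card_eq_zero.1 (by omega)
    have := heq1.card_le_one_of_eq_empty h0 (vFig1_pos (j := 1) (by decide))
    have := heq1.card_le_one_of_eq_empty h0 (vFig1_pos (j := 2) (by decide))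
    omega
  · exact heq
  · have hval : ∀ j, 1 < bundleVal (vFig1 j) (A j) := fun j =>
      lt_of_lt_of_le (by norm_num)
        (heq1.le_bundleVal_of_two_le_card j (by norm_num) vFig1_zero_ge hgt)
    have := three_le_card_add_card (g₀ := (0 : Fin 4))
      (vFig1_eq_one (j := 1) (by decide)) (hpart.1 1 2 (by decide)) (hval 1)
      (by simpa only [show vFig1 1 = vFig1 2 from rfl] using hval 2)
    omega
end

section
/- In the fair division instance with 3 agents and 4 goods where agent 1 values the goods (1.4, 2.2, 2.2, 2.2) and agents 2 and 3 each value them (5, 1, 1, 1), every EQ1 allocation A satisfies v_1(A_1) < (v_2(A_2) + v_3(A_3))/2. -/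
open Finset

/-!
Write `S = A 0` for the bundle of agent 0 and `k` for the number of goods other than `0` in it.
Agents 1 and 2 share the valuation `(5, 1, 1, 1)`, so their values add up to `8` minus the value
of `S` for them, and EQ1 of agent 0 towards each of them bounds both values from below by
`v₀(S) - 11/5`. If good `0` lies in `S`, adding the two bounds forces `k = 0`, and then
`v₀(S) = 7/5 < 3/2`. Otherwise good `0` gives one of agents 1, 2 value at least `5`, so the other
has at most `3 - k`; the EQ1 bound then forces `k ≤ 1`, and `2 · (11/5) k < 8 - k`.
-/

namespace isPartition

variable {ι γ : Type*} [Fintype ι] [Fintype γ] [DecidableEq γ] {A : ι → Finset γ}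

theorem sum_bundleVal (hA : isPartition A) (u : γ → ℚ) :
    ∑ i, bundleVal u (A i) = bundleVal u univ := by
  rw [bundleVal, ← hA.2, sum_biUnion fun i _ j _ hij => hA.1 i j hij]
  rfl

theorem exists_mem (hA : isPartition A) (g : γ) : ∃ i, g ∈ A i := by
  simpa only [← hA.2, mem_biUnion, mem_univ, true_and] using mem_univ g

end isPartition

theorem EQ1.sub_le_bundleVal {ι γ : Type*} [DecidableEq γ] {v : ι → γ → ℚ} {A : ι → Finset γ}
    (hA : EQ1 v A) {i : ι} (j : ι) (hne : (A i).Nonempty) {c : ℚ} (hc : ∀ g ∈ A i, v i g ≤ c) :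
    bundleVal (v i) (A i) - c ≤ bundleVal (v j) (A j) := by
  obtain ⟨g, hg, hle⟩ := hA i j hne.ne_empty
  rw [bundleVal, sum_erase_eq_sub hg] at hle
  exact (sub_le_sub_left (hc g hg) _).trans hle

theorem bundleVal_eq_ite_add_card_erase {γ : Type*} [DecidableEq γ] {u : γ → ℚ} {g₀ : γ} {c : ℚ}
    (hu : ∀ g ≠ g₀, u g = c) (S : Finset γ) :
    bundleVal u S = (if g₀ ∈ S then u g₀ else 0) + c * #(S.erase g₀) := by
  have hrest : bundleVal u (S.erase g₀) = c * #(S.erase g₀) := by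
    rw [bundleVal, sum_congr rfl fun g hg => hu g (ne_of_mem_erase hg), sum_const, nsmul_eq_mul,
      mul_comm]
  split_ifs with h
  · rw [← hrest, bundleVal, bundleVal, add_sum_erase _ _ h]
  · rw [← hrest, erase_eq_of_notMem h, zero_add]

theorem vFig1_two : vFig1 2 = vFig1 1 := rfl

theorem bundleVal_vFig1_zero (S : Finset (Fin 4)) :
    bundleVal (vFig1 0) S = (if 0 ∈ S then 7 / 5 else 0) + 11 / 5 * #(S.erase 0) :=
  bundleVal_eq_ite_add_card_erase (by intro g hg; fin_cases g <;> simp_all [vFig1]) S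

theorem bundleVal_vFig1_one (S : Finset (Fin 4)) :
    bundleVal (vFig1 1) S = (if 0 ∈ S then 5 else 0) + #(S.erase 0) := by
  rw [bundleVal_eq_ite_add_card_erase (g₀ := 0) (c := 1)
    (by intro g hg; fin_cases g <;> simp_all [vFig1]) S, one_mul]
  rfl

theorem five_le_bundleVal_vFig1_one {S : Finset (Fin 4)} (h0 : 0 ∈ S) :
    5 ≤ bundleVal (vFig1 1) S := by
  rw [bundleVal_vFig1_one, if_pos h0]
  simp

namespace isPartition

variable {A : Fin 3 → Finset (Fin 4)}

theorem bundleVal_vFig1_one_add_add (hA : isPartition A) :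
    bundleVal (vFig1 1) (A 0) + bundleVal (vFig1 1) (A 1) + bundleVal (vFig1 1) (A 2) = 8 := by
  rw [← Fin.sum_univ_three (fun i => bundleVal (vFig1 1) (A i)), hA.sum_bundleVal]
  rw [bundleVal_vFig1_one, if_pos (mem_univ 0), card_erase_of_mem (mem_univ 0)]
  norm_num

theorem five_le_bundleVal_vFig1_one_or (hA : isPartition A) (h0 : 0 ∉ A 0) :
    5 ≤ bundleVal (vFig1 1) (A 1) ∨ 5 ≤ bundleVal (vFig1 1) (A 2) := by
  obtain ⟨j, hj⟩ := hA.exists_mem 0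
  fin_cases j
  · exact absurd hj h0
  · exact .inl (five_le_bundleVal_vFig1_one hj)
  · exact .inr (five_le_bundleVal_vFig1_one hj)

end isPartition

theorem EQ1.bundleVal_vFig1_zero_sub_le {A : Fin 3 → Finset (Fin 4)} (hA : EQ1 vFig1 A)
    {j : Fin 3} (hj : j ≠ 0) (hne : (A 0).Nonempty) :
    bundleVal (vFig1 0) (A 0) - 11 / 5 ≤ bundleVal (vFig1 1) (A j) := by
  have hv : vFig1 j = vFig1 1 := by fin_cases j <;> simp_all [vFig1_two]
  exact hv ▸ hA.sub_le_bundleVal j hne fun g _ => by fin_cases g <;> norm_num [vFig1]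

/-- in the instance of Fig. 1, every EQ1 allocation `A` satisfies
`v₁(A₁) < (v₂(A₂) + v₃(A₃))/2`. -/
theorem stmt1 (A : Fin 3 → Finset (Fin 4)) (hpart : isPartition A)
    (heq1 : EQ1 vFig1 A) :
    bundleVal (vFig1 0) (A 0)
      < (bundleVal (vFig1 1) (A 1) + bundleVal (vFig1 2) (A 2)) / 2 := by
  have hsum := hpart.bundleVal_vFig1_one_add_add
  have h1 := heq1.bundleVal_vFig1_zero_sub_le (j := 1) (by decide)
  have h2 := heq1.bundleVal_vFig1_zero_sub_le (j := 2) (by decide)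
  rw [vFig1_two, bundleVal_vFig1_zero]
  rw [bundleVal_vFig1_zero] at h1 h2
  rw [bundleVal_vFig1_one] at hsum
  set k : ℕ := #((A 0).erase 0)
  by_cases h0 : 0 ∈ A 0
  · specialize h1 ⟨0, h0⟩
    specialize h2 ⟨0, h0⟩
    simp only [if_pos h0] at hsum h1 h2 ⊢
    have hk : (k : ℚ) = 0 := by
      have : (k : ℚ) < 1 := by linarith
      exact_mod_cast Nat.lt_one_iff.mp (by exact_mod_cast this)
    linarith
  · simp only [if_neg h0] at hsum h1 h2 ⊢
    have hk : k ≤ 1 := by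
      by_contra! hk
      have hne : (A 0).Nonempty := (card_pos.mp (zero_lt_one.trans hk)).mono (erase_subset _ _)
      have : (2 : ℚ) ≤ k := by exact_mod_cast hk
      rcases hpart.five_le_bundleVal_vFig1_one_or h0 with h | h <;> linarith [h1 hne, h2 hne]
    have : (k : ℚ) ≤ 1 := by exact_mod_cast hk
    linarith
end

section
/- If a fair division instance admits a randomized allocation that is ex-ante EQ and whose support consists only of EQ1 allocations, then for every agent i there exists an EQ1 allocation A such that v_i(A_i) >= (1/(n-1)) * sum over j != i of v_j(A_j) (equivalently, n * v_i(A_i) >= sum over all j of v_j(A_j)). -/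
open Finset

/-!
An averaging argument. Fix `i` and let `gap A = n * v_i(A_i) - ∑_j v_j(A_j)`. Under the
ex-ante EQ distribution `p` every agent has the same expected utility, so the expectation
of `gap` is `n * E[v_i] - ∑_j E[v_j] = 0`. Hence some allocation in the support of `p`, which
is an EQ1 partition, has `gap ≥ 0`.
-/

section Averaging

variable {α R : Type*}

theorem Finset.exists_ne_zero_nonneg_of_sum_mul_nonneg [Ring R] [LinearOrder R]
    [IsStrictOrderedRing R] {s : Finset α} {p f : α → R}
    (hp : ∀ a ∈ s, 0 ≤ p a) (hs : ∃ a ∈ s, p a ≠ 0) (h : 0 ≤ ∑ a ∈ s, p a * f a) :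
    ∃ a ∈ s, p a ≠ 0 ∧ 0 ≤ f a := by
  by_contra! hneg
  obtain ⟨a, ha, hpa⟩ := hs
  refine h.not_gt (sum_neg' (fun b hb => ?_)
    ⟨a, ha, mul_neg_of_pos_of_neg ((hp a ha).lt_of_ne' hpa) (hneg a ha hpa)⟩)
  rcases eq_or_ne (p b) 0 with hpb | hpb
  · simp [hpb]
  · exact mul_nonpos_of_nonneg_of_nonpos (hp b hb) (hneg b hb hpb).le

theorem Finset.sum_mul_card_mul_sub_sum_eq_zero [CommRing R] {ι : Type*} [Fintype ι]
    (s : Finset α) (p : α → R) (u : ι → α → R)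
    (heq : ∀ j k, ∑ a ∈ s, p a * u j a = ∑ a ∈ s, p a * u k a) (i : ι) :
    ∑ a ∈ s, p a * (Fintype.card ι * u i a - ∑ j, u j a) = 0 := by
  calc ∑ a ∈ s, p a * (Fintype.card ι * u i a - ∑ j, u j a)
      = Fintype.card ι * ∑ a ∈ s, p a * u i a - ∑ j, ∑ a ∈ s, p a * u j a := by
        simp only [mul_sub, sum_sub_distrib, mul_sum, sum_comm (s := s)]
        congr 1
        exact sum_congr rfl fun a _ => mul_left_comm _ _ _
    _ = 0 := by simp [heq _ i]

end Averaging

/-- if an instance admits an ex-ante EQ randomized allocation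
supported on EQ1 allocations, then for every agent `i` there is an EQ1
allocation `A` with `n * v_i(A_i) ≥ ∑_j v_j(A_j)`. -/
theorem stmt3 (n m : ℕ) (v : Fin n → Fin m → ℚ)
    (h : ∃ p : (Fin n → Finset (Fin m)) → ℚ,
          (∀ A, 0 ≤ p A) ∧
          (∑ A : Fin n → Finset (Fin m), p A) = 1 ∧
          (∀ A, p A ≠ 0 → isPartition A ∧ EQ1 v A) ∧
          (∀ i j : Fin n,
            (∑ A : Fin n → Finset (Fin m), p A * bundleVal (v i) (A i)) =
            (∑ A : Fin n → Finset (Fin m), p A * bundleVal (v j) (A j)))) :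
    ∀ i : Fin n, ∃ A : Fin n → Finset (Fin m),
      isPartition A ∧ EQ1 v A ∧
      (n : ℚ) * bundleVal (v i) (A i) ≥ ∑ j : Fin n, bundleVal (v j) (A j) := by
  obtain ⟨p, hp0, hp1, hsupp, heq⟩ := h
  intro i
  have hgap := sum_mul_card_mul_sub_sum_eq_zero univ p (fun j A => bundleVal (v j) (A j)) heq i
  rw [Fintype.card_fin] at hgap
  obtain ⟨A, -, hA, hA_gap⟩ := exists_ne_zero_nonneg_of_sum_mul_nonneg (fun A _ => hp0 A)
    (exists_ne_zero_of_sum_ne_zero (hp1 ▸ one_ne_zero)) hgap.ge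
  exact ⟨A, (hsupp A hA).1, (hsupp A hA).2, sub_nonneg.mp hA_gap⟩
end

section
/- Let S = {b_1,...,b_m} be positive integers with sum 2T and m >= 20, and consider the fair division instance with 3 agents and m+2 goods where agent 1 values each of g_1,...,g_m at T, values d_1 at 4T, and d_2 at T, while agents 2 and 3 value g_i at b_i, d_1 at 5T, and d_2 at (m-2)T. If the indices [m] admit a partition into S_1, S_2 with sum of b_i over each part equal to T, then the randomized allocation giving agent 1 the good d_2, agent 2 the goods {g_i : i in S_1}, agent 3 the goods {g_i : i in S_2}, and giving d_1 to agent 1 with probability 5/13 and to agents 2 and 3 with probability 4/13 each, is ex-ante EQ and ex-post EQ1. -/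
/-!
Every agent values her bundle without `d₁` at exactly `T`, and `d₁` is worth `4T` to agent 1
and `5T` to agents 2 and 3; the probabilities `5/13, 4/13, 4/13` are chosen so that
`(5/13)·4T = (4/13)·5T`, which makes all expected utilities equal to `T + 20T/13`.
Ex post, every bundle is worth at least `T` to its owner, and removing `d₁` from the bundle
that holds it, or any good from a bundle of value `T`, brings its value down to at most `T`.
-/

open Finset

/-- Valuations of the weak-NP-hardness reduction (Fig. 2): goods are
`g_1, …, g_m` (`Sum.inl`) plus `d_1 = Sum.inr 0` and `d_2 = Sum.inr 1`. -/
def vRed (m : ℕ) (T : ℤ) (b : Fin m → ℤ) : Fin 3 → (Fin m ⊕ Fin 2) → ℚ :=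
  fun i g =>
    match g with
    | Sum.inl j => if i = 0 then (T : ℚ) else (b j : ℚ)
    | Sum.inr 0 => if i = 0 then 4 * (T : ℚ) else 5 * (T : ℚ)
    | Sum.inr 1 => if i = 0 then (T : ℚ) else ((m : ℚ) - 2) * (T : ℚ)

/-- The three integral allocations in the support: agent 1 gets `d₂`,
agent 2 gets `{g_i : i ∈ S₁}`, agent 3 gets `{g_i : i ∈ S₂}`, and `d₁` goes to
agent `k` in allocation `redAlloc S₁ S₂ k`. -/
def redAlloc {m : ℕ} (S₁ S₂ : Finset (Fin m)) (k : Fin 3) :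
    Fin 3 → Finset (Fin m ⊕ Fin 2) :=
  fun i =>
    (if i = 0 then {Sum.inr 1}
     else if i = 1 then S₁.image Sum.inl
     else S₂.image Sum.inl) ∪ (if i = k then {Sum.inr 0} else ∅)

theorem isPartition_of_mem_iff {ι γ : Type*} [Fintype ι] [Fintype γ] [DecidableEq γ]
    {A : ι → Finset γ} (owner : γ → ι) (h : ∀ g i, g ∈ A i ↔ owner g = i) :
    isPartition A := by
  refine ⟨fun i j hij => disjoint_left.2 fun g hi hj => hij ?_, ?_⟩
  · rw [← (h g i).1 hi, (h g j).1 hj]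
  · exact eq_univ_of_forall fun g => mem_biUnion.2 ⟨owner g, mem_univ _, (h g _).2 rfl⟩

theorem EQ1_of_threshold {ι γ : Type*} [DecidableEq γ] {v : ι → γ → ℚ} {A : ι → Finset γ}
    (c : ℚ) (hge : ∀ i, c ≤ bundleVal (v i) (A i))
    (herase : ∀ i, A i ≠ ∅ → ∃ g ∈ A i, bundleVal (v i) ((A i).erase g) ≤ c) :
    EQ1 v A := fun i j hne =>
  let ⟨g, hg, hle⟩ := herase i hne
  ⟨g, hg, hle.trans (hge j)⟩

theorem bundleVal_erase_le {γ : Type*} [DecidableEq γ] {v : γ → ℚ} {S : Finset γ} {g : γ}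
    (hg : g ∈ S) (hv : 0 ≤ v g) : bundleVal v (S.erase g) ≤ bundleVal v S := by
  unfold bundleVal
  linarith [sum_erase_eq_sub (f := v) hg]

section Reduction

variable {m : ℕ} (S₁ S₂ : Finset (Fin m))

def redBase (i : Fin 3) : Finset (Fin m ⊕ Fin 2) :=
  if i = 0 then {Sum.inr 1} else if i = 1 then S₁.image Sum.inl else S₂.image Sum.inl

def redOwner (k : Fin 3) : Fin m ⊕ Fin 2 → Fin 3
  | Sum.inl j => if j ∈ S₁ then 1 else 2
  | Sum.inr 0 => k
  | Sum.inr 1 => 0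

theorem redAlloc_eq (k i : Fin 3) :
    redAlloc S₁ S₂ k i = redBase S₁ S₂ i ∪ if i = k then {Sum.inr 0} else ∅ :=
  rfl

theorem redAlloc_of_ne {k i : Fin 3} (h : i ≠ k) : redAlloc S₁ S₂ k i = redBase S₁ S₂ i := by
  simp [redAlloc_eq, h]

theorem inr_zero_notMem_redBase (i : Fin 3) : Sum.inr 0 ∉ redBase S₁ S₂ i := by
  unfold redBase
  split_ifs <;> simp

theorem redAlloc_self (k : Fin 3) :
    redAlloc S₁ S₂ k k = insert (Sum.inr 0) (redBase S₁ S₂ k) := by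
  rw [redAlloc_eq, if_pos rfl, union_comm, insert_eq]

variable {S₁ S₂}

theorem mem_redAlloc_iff (hdisj : Disjoint S₁ S₂) (hcover : S₁ ∪ S₂ = univ)
    (k : Fin 3) (g : Fin m ⊕ Fin 2) (i : Fin 3) :
    g ∈ redAlloc S₁ S₂ k i ↔ redOwner S₁ k g = i := by
  rcases g with j | t
  · by_cases hj : j ∈ S₁
    · have hj₂ : j ∉ S₂ := disjoint_left.1 hdisj hj
      fin_cases i <;> simp [redAlloc, redOwner, mem_ite, hj, hj₂]
    · have hj₂ : j ∈ S₂ := (mem_union.1 (hcover ▸ mem_univ j)).resolve_left hj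
      fin_cases i <;> simp [redAlloc, redOwner, mem_ite, hj, hj₂]
  · fin_cases t <;> fin_cases i <;> simp [redAlloc, redOwner, mem_ite, eq_comm]

theorem isPartition_redAlloc (hdisj : Disjoint S₁ S₂) (hcover : S₁ ∪ S₂ = univ) (k : Fin 3) :
    isPartition (redAlloc S₁ S₂ k) :=
  isPartition_of_mem_iff (redOwner S₁ k) (mem_redAlloc_iff hdisj hcover k)

variable {T : ℤ} {b : Fin m → ℤ}

theorem bundleVal_redBase (hS₁ : ∑ j ∈ S₁, b j = T) (hS₂ : ∑ j ∈ S₂, b j = T) (i : Fin 3) :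
    bundleVal (vRed m T b i) (redBase S₁ S₂ i) = T := by
  have hQ : ∀ S : Finset (Fin m), ∑ j ∈ S, b j = T → ∑ j ∈ S, (b j : ℚ) = T := fun S hS => by
    exact_mod_cast hS
  fin_cases i <;>
    simp [bundleVal, redBase, vRed, sum_image, hQ _ hS₁, hQ _ hS₂]

theorem vRed_nonneg_of_mem_redBase (hb : ∀ j, 0 ≤ b j) (hT : 0 ≤ T) {i : Fin 3}
    {g : Fin m ⊕ Fin 2} (hg : g ∈ redBase S₁ S₂ i) : 0 ≤ vRed m T b i g := by
  have hTQ : (0 : ℚ) ≤ T := by exact_mod_cast hT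
  unfold redBase at hg
  split_ifs at hg with h0
  · simp_all [vRed]
  all_goals
    obtain ⟨j, -, rfl⟩ := mem_image.1 hg
    simpa [vRed, h0] using hb j

theorem vRed_inr_zero_nonneg (hT : 0 ≤ T) (i : Fin 3) : 0 ≤ vRed m T b i (Sum.inr 0) := by
  have hTQ : (0 : ℚ) ≤ T := by exact_mod_cast hT
  simp only [vRed]
  split_ifs <;> linarith

theorem bundleVal_redAlloc (hS₁ : ∑ j ∈ S₁, b j = T) (hS₂ : ∑ j ∈ S₂, b j = T) (k i : Fin 3) :
    bundleVal (vRed m T b i) (redAlloc S₁ S₂ k i) =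
      T + if i = k then vRed m T b i (Sum.inr 0) else 0 := by
  split_ifs with h
  · subst h
    rw [redAlloc_self, bundleVal, sum_insert (inr_zero_notMem_redBase S₁ S₂ i), ← bundleVal,
      bundleVal_redBase hS₁ hS₂, add_comm]
  · rw [redAlloc_of_ne S₁ S₂ h, bundleVal_redBase hS₁ hS₂, add_zero]

theorem EQ1_redAlloc (hb : ∀ j, 0 ≤ b j) (hS₁ : ∑ j ∈ S₁, b j = T) (hS₂ : ∑ j ∈ S₂, b j = T)
    (k : Fin 3) : EQ1 (vRed m T b) (redAlloc S₁ S₂ k) := by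
  have hT : 0 ≤ T := hS₁ ▸ sum_nonneg fun j _ => hb j
  have hTQ : (0 : ℚ) ≤ T := by exact_mod_cast hT
  refine EQ1_of_threshold T (fun i => ?_) (fun i hne => ?_)
  · rw [bundleVal_redAlloc hS₁ hS₂]
    refine le_add_of_nonneg_right ?_
    split_ifs
    exacts [vRed_inr_zero_nonneg hT i, le_rfl]
  · by_cases h : i = k
    · subst h
      refine ⟨Sum.inr 0, by simp [redAlloc_self], le_of_eq ?_⟩
      rw [redAlloc_self, erase_insert (inr_zero_notMem_redBase S₁ S₂ i),
        bundleVal_redBase hS₁ hS₂]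
    · rw [redAlloc_of_ne S₁ S₂ h] at hne ⊢
      obtain ⟨g, hg⟩ := nonempty_iff_ne_empty.2 hne
      refine ⟨g, hg, ?_⟩
      calc bundleVal (vRed m T b i) ((redBase S₁ S₂ i).erase g)
          ≤ bundleVal (vRed m T b i) (redBase S₁ S₂ i) :=
            bundleVal_erase_le hg (vRed_nonneg_of_mem_redBase hb hT hg)
        _ = T := bundleVal_redBase hS₁ hS₂ i

theorem expectedVal_redAlloc (hS₁ : ∑ j ∈ S₁, b j = T) (hS₂ : ∑ j ∈ S₂, b j = T) (i : Fin 3) :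
    ∑ k : Fin 3, (![5/13, 4/13, 4/13] : Fin 3 → ℚ) k *
        bundleVal (vRed m T b i) (redAlloc S₁ S₂ k i) = T + 20 / 13 * T := by
  simp only [Fin.sum_univ_three, bundleVal_redAlloc hS₁ hS₂]
  fin_cases i <;>
    simp only [vRed, Matrix.cons_val_zero, Matrix.cons_val_one, Matrix.cons_val, Fin.isValue,
      Fin.zero_eta, Fin.mk_one, Fin.reduceFinMk, Fin.reduceEq, ↓reduceIte, add_zero] <;>
    ring

end Reduction

theorem stmt4_general (m : ℕ) (T : ℤ) (b : Fin m → ℤ)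
    (hb : ∀ i, 0 < b i)
    (S₁ S₂ : Finset (Fin m)) (hdisj : Disjoint S₁ S₂) (hcover : S₁ ∪ S₂ = Finset.univ)
    (hS₁ : ∑ i ∈ S₁, b i = T) (hS₂ : ∑ i ∈ S₂, b i = T) :
    (∀ k : Fin 3, isPartition (redAlloc S₁ S₂ k) ∧ EQ1 (vRed m T b) (redAlloc S₁ S₂ k)) ∧
    (∀ i j : Fin 3,
      (∑ k : Fin 3, (![5/13, 4/13, 4/13] : Fin 3 → ℚ) k *
          bundleVal (vRed m T b i) (redAlloc S₁ S₂ k i)) =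
      (∑ k : Fin 3, (![5/13, 4/13, 4/13] : Fin 3 → ℚ) k *
          bundleVal (vRed m T b j) (redAlloc S₁ S₂ k j))) :=
  ⟨fun k => ⟨isPartition_redAlloc hdisj hcover k,
      EQ1_redAlloc (fun j => (hb j).le) hS₁ hS₂ k⟩,
    fun i j => by rw [expectedVal_redAlloc hS₁ hS₂, expectedVal_redAlloc hS₁ hS₂]⟩

/-- in a `yes` instance of 2-partition, the randomized allocation
giving `d₁` to agent 1 with probability `5/13` and to agents 2 and 3 with
probability `4/13` each is ex-ante EQ and ex-post EQ1. -/
theorem stmt4 (m : ℕ) (hm : 20 ≤ m) (T : ℤ) (b : Fin m → ℤ)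
    (hb : ∀ i, 0 < b i) (hsum : ∑ i, b i = 2 * T)
    (S₁ S₂ : Finset (Fin m)) (hdisj : Disjoint S₁ S₂) (hcover : S₁ ∪ S₂ = Finset.univ)
    (hS₁ : ∑ i ∈ S₁, b i = T) (hS₂ : ∑ i ∈ S₂, b i = T) :
    (∀ k : Fin 3, isPartition (redAlloc S₁ S₂ k) ∧ EQ1 (vRed m T b) (redAlloc S₁ S₂ k)) ∧
    (∀ i j : Fin 3,
      (∑ k : Fin 3, (![5/13, 4/13, 4/13] : Fin 3 → ℚ) k *
          bundleVal (vRed m T b i) (redAlloc S₁ S₂ k i)) =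
      (∑ k : Fin 3, (![5/13, 4/13, 4/13] : Fin 3 → ℚ) k *
          bundleVal (vRed m T b j) (redAlloc S₁ S₂ k j))) :=
  stmt4_general m T b hb S₁ S₂ hdisj hcover hS₁ hS₂
end

section
/- For m = 3k > 8 with positive integers b_1,...,b_m summing to kT, consider the (k+1)-agent 3-partition reduction instance (agent 0 values each g_j at (2m/3)T, d_1 at T, d_2 at (m/3 - 1)T; each agent i in [k] values g_j at b_j and d_1, d_2 at (m^2/3)T). In every EQ1 allocation A satisfying v_0(A_0) >= (1/k) * sum over i in [k] of v_i(A_i), agent 0 receives both goods d_1 and d_2. -/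
open Finset

/-- Valuations of the strong-NP-hardness reduction (with `m = 3k`): agent 0 is
`none`, agents `1, …, k` are `some i`; goods are `g_1, …, g_m` (`Sum.inl`) plus
`d_1 = Sum.inr 0` and `d_2 = Sum.inr 1`.  Agent 0 values each `g_j` at
`(2m/3)T = 2kT`, `d_1` at `T` and `d_2` at `(m/3 - 1)T = (k-1)T`; each agent
`i ∈ [k]` values `g_j` at `b_j` and `d_1, d_2` at `(m²/3)T = 3k²T`. -/
def vStrong (k : ℕ) (T : ℤ) (b : Fin (3 * k) → ℤ) :
    Option (Fin k) → (Fin (3 * k) ⊕ Fin 2) → ℚ :=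
  fun i g =>
    match i, g with
    | none, Sum.inl _ => 2 * (k : ℚ) * (T : ℚ)
    | none, Sum.inr 0 => (T : ℚ)
    | none, Sum.inr 1 => ((k : ℚ) - 1) * (T : ℚ)
    | some _, Sum.inl j => (b j : ℚ)
    | some _, Sum.inr _ => 3 * (k : ℚ) ^ 2 * (T : ℚ)

/-!
If a dummy good `d` is not in `A₀`, its holder `i ∈ [k]` has `v_i(A_i) ≥ 3k²T`, so the richness
condition forces `v₀(A₀) ≥ 3kT`. Agent 0 then holds at most the other dummy, worth less than `kT`
to her, so `A₀` contains at least two goods `g_j`, each worth `2kT`; hence `v₀(A₀) ≥ 4kT`, and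
removing any single good (worth at most `2kT`) leaves her at least `2kT`. But the `k ≥ 3` agents
of `[k]` share only two dummies, so some `j ∈ [k]` holds goods `g_j` only and has
`v_j(A_j) ≤ ∑ b = kT < 2kT`, contradicting EQ1 for the pair `(0, j)`.
-/

lemma bundleVal_erase {γ : Type*} [DecidableEq γ] (v : γ → ℚ) {S : Finset γ} {g : γ}
    (hg : g ∈ S) : bundleVal v (S.erase g) = bundleVal v S - v g :=
  sum_erase_eq_sub hg

lemma bundleVal_eq_toLeft_add_toRight {α β : Type*} (v : α ⊕ β → ℚ) (S : Finset (α ⊕ β)) :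
    bundleVal v S = ∑ a ∈ S.toLeft, v (.inl a) + ∑ y ∈ S.toRight, v (.inr y) :=
  sum_sum_eq_sum_toLeft_add_sum_toRight S v

lemma isPartition.exists_mem_s8 {ι γ : Type*} [Fintype ι] [Fintype γ] [DecidableEq γ]
    {A : ι → Finset γ} (hA : isPartition A) (g : γ) : ∃ i, g ∈ A i := by
  have hg : g ∈ univ.biUnion A := hA.2 ▸ mem_univ g
  simpa using hg

lemma exists_eq_empty_of_pairwise_disjoint {κ γ : Type*} [Fintype κ] [Fintype γ]
    {F : κ → Finset γ} (hF : Pairwise fun i j => Disjoint (F i) (F j))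
    (h : Fintype.card γ < Fintype.card κ) : ∃ j, F j = ∅ := by
  by_contra! hne
  choose f hf using hne
  have hinj : Function.Injective f := fun i j hij =>
    by_contra fun hij' => disjoint_left.1 (hF hij') (hf i) (hij ▸ hf j)
  exact h.not_ge (Fintype.card_le_of_injective f hinj)

lemma exists_toRight_eq_empty {κ α β : Type*} [Fintype κ] [Fintype β] {A : κ → Finset (α ⊕ β)}
    (hA : Pairwise fun i j => Disjoint (A i) (A j)) (h : Fintype.card β < Fintype.card κ) :
    ∃ j, (A j).toRight = ∅ :=
  exists_eq_empty_of_pairwise_disjoint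
    (fun _ _ hij => disjoint_left.2 fun _ hi hj =>
      disjoint_left.1 (hA hij) (mem_toRight.1 hi) (mem_toRight.1 hj)) h

lemma pos_of_sum_eq_mul {ι : Type*} [Fintype ι] [Nonempty ι] {b : ι → ℤ} (hb : ∀ i, 0 < b i)
    {k T : ℤ} (hk : 0 ≤ k) (hsum : ∑ i, b i = k * T) : 0 < T :=
  pos_of_mul_pos_right (hsum ▸ sum_pos (fun i _ => hb i) univ_nonempty) hk

section vStrong

variable {k : ℕ} {T : ℤ} {b : Fin (3 * k) → ℤ}

lemma vStrong_none_nonneg (hk : 1 ≤ k) (hT : 0 ≤ T) (g : Fin (3 * k) ⊕ Fin 2) :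
    0 ≤ vStrong k T b none g := by
  have hk' : (1 : ℚ) ≤ k := by exact_mod_cast hk
  have hT' : (0 : ℚ) ≤ T := by exact_mod_cast hT
  rcases g with _ | y
  · simp only [vStrong]; positivity
  · fin_cases y <;> simp only [vStrong] <;> nlinarith

lemma vStrong_none_le (hk : 1 ≤ k) (hT : 0 ≤ T) (g : Fin (3 * k) ⊕ Fin 2) :
    vStrong k T b none g ≤ 2 * k * T := by
  have hk' : (1 : ℚ) ≤ k := by exact_mod_cast hk
  have hT' : (0 : ℚ) ≤ T := by exact_mod_cast hT
  rcases g with _ | y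
  · exact le_rfl
  · fin_cases y <;> simp only [vStrong] <;> nlinarith

lemma sum_vStrong_none_inr_lt (hk : 2 ≤ k) (hT : 0 < T) {D : Finset (Fin 2)} {x : Fin 2}
    (hx : x ∉ D) : ∑ y ∈ D, vStrong k T b none (.inr y) < k * T := by
  have hk' : (2 : ℚ) ≤ k := by exact_mod_cast hk
  have hT' : (0 : ℚ) < T := by exact_mod_cast hT
  calc ∑ y ∈ D, vStrong k T b none (.inr y)
      ≤ ∑ y ∈ univ.erase x, vStrong k T b none (.inr y) :=
        sum_le_sum_of_subset_of_nonneg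
          (fun y hy => mem_erase.2 ⟨ne_of_mem_of_not_mem hy hx, mem_univ y⟩)
          fun y _ _ => vStrong_none_nonneg (by omega) hT.le _
    _ = T + (k - 1) * T - vStrong k T b none (.inr x) := by
        rw [sum_erase_eq_sub (mem_univ x), Fin.sum_univ_two]; rfl
    _ < k * T := by fin_cases x <;> simp only [vStrong] <;> nlinarith

lemma bundleVal_vStrong_none (S : Finset (Fin (3 * k) ⊕ Fin 2)) :
    bundleVal (vStrong k T b none) S =
      #S.toLeft * (2 * k * T) + ∑ y ∈ S.toRight, vStrong k T b none (.inr y) := by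
  rw [bundleVal_eq_toLeft_add_toRight, ← nsmul_eq_mul, ← sum_const]
  rfl

lemma four_mul_le_bundleVal_vStrong_none (hk : 2 ≤ k) (hT : 0 < T)
    {S : Finset (Fin (3 * k) ⊕ Fin 2)} {x : Fin 2} (hx : .inr x ∉ S)
    (h : 3 * k * T ≤ bundleVal (vStrong k T b none) S) :
    4 * k * T ≤ bundleVal (vStrong k T b none) S := by
  have hkT : (0 : ℚ) < k * T :=
    mul_pos (by exact_mod_cast (by omega : 0 < k)) (by exact_mod_cast hT)
  have hdummy := sum_vStrong_none_inr_lt (b := b) hk hT (mt mem_toRight.1 hx)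
  have hdummy_nonneg : 0 ≤ ∑ y ∈ S.toRight, vStrong k T b none (.inr y) :=
    sum_nonneg fun y _ => vStrong_none_nonneg (by omega) hT.le _
  rw [bundleVal_vStrong_none] at h ⊢
  have hleft : 2 ≤ #S.toLeft := by
    by_contra! hlt
    have : (#S.toLeft : ℚ) ≤ 1 := by exact_mod_cast Nat.le_of_lt_succ hlt
    nlinarith
  have : (2 : ℚ) ≤ #S.toLeft := by exact_mod_cast hleft
  nlinarith

lemma vStrong_some_nonneg (hb : ∀ j, 0 ≤ b j) (hT : 0 ≤ T) (i : Fin k)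
    (g : Fin (3 * k) ⊕ Fin 2) : 0 ≤ vStrong k T b (some i) g := by
  rcases g with j | _
  · show (0 : ℚ) ≤ b j
    exact_mod_cast hb j
  · simp only [vStrong]
    have : (0 : ℚ) ≤ T := by exact_mod_cast hT
    positivity

lemma bundleVal_vStrong_some_le (hb : ∀ j, 0 ≤ b j) (hsum : ∑ j, b j = k * T) (i : Fin k)
    {S : Finset (Fin (3 * k) ⊕ Fin 2)} (hS : S.toRight = ∅) :
    bundleVal (vStrong k T b (some i)) S ≤ k * T := by
  rw [bundleVal_eq_toLeft_add_toRight, hS, sum_empty, add_zero]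
  calc ∑ a ∈ S.toLeft, vStrong k T b (some i) (.inl a)
      = ∑ a ∈ S.toLeft, (b a : ℚ) := rfl
    _ ≤ ∑ a, (b a : ℚ) :=
        sum_le_sum_of_subset_of_nonneg (subset_univ _) fun a _ _ => by exact_mod_cast hb a
    _ = k * T := by exact_mod_cast hsum

lemma three_mul_sq_le_sum_bundleVal_vStrong_some (hb : ∀ j, 0 ≤ b j) (hT : 0 ≤ T)
    {A : Fin k → Finset (Fin (3 * k) ⊕ Fin 2)} {i : Fin k} {x : Fin 2} (hx : .inr x ∈ A i) :
    3 * (k : ℚ) ^ 2 * T ≤ ∑ j, bundleVal (vStrong k T b (some j)) (A j) :=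
  calc 3 * (k : ℚ) ^ 2 * T = vStrong k T b (some i) (.inr x) := rfl
    _ ≤ bundleVal (vStrong k T b (some i)) (A i) :=
        single_le_sum (fun g _ => vStrong_some_nonneg hb hT i g) hx
    _ ≤ ∑ j, bundleVal (vStrong k T b (some j)) (A j) :=
        single_le_sum (f := fun j => bundleVal (vStrong k T b (some j)) (A j))
          (fun j _ => sum_nonneg fun g _ => vStrong_some_nonneg hb hT j g) (mem_univ i)

end vStrong

/-- in the strong reduction instance (with `m = 3k > 8`), every
EQ1 allocation `A` with `v₀(A₀) ≥ (1/k) ∑_{i ∈ [k]} v_i(A_i)` gives both `d₁`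
and `d₂` to agent 0. -/
theorem stmt8 (k : ℕ) (hk : 8 < 3 * k) (T : ℤ) (b : Fin (3 * k) → ℤ)
    (hb : ∀ i, 0 < b i) (hsum : ∑ i, b i = k * T)
    (A : Option (Fin k) → Finset (Fin (3 * k) ⊕ Fin 2))
    (hpart : isPartition A) (heq1 : EQ1 (vStrong k T b) A)
    (hrich : bundleVal (vStrong k T b none) (A none) ≥
      (1 / (k : ℚ)) * ∑ i : Fin k, bundleVal (vStrong k T b (some i)) (A (some i))) :
    Sum.inr 0 ∈ A none ∧ Sum.inr 1 ∈ A none := by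
  have : Nonempty (Fin (3 * k)) := ⟨⟨0, by omega⟩⟩
  have hT : 0 < T := pos_of_sum_eq_mul hb (Int.natCast_nonneg k) hsum
  have hkT : (0 : ℚ) < k * T :=
    mul_pos (by exact_mod_cast (by omega : 0 < k)) (by exact_mod_cast hT)
  have hb' : ∀ j, 0 ≤ b j := fun j => (hb j).le
  suffices h : ∀ x : Fin 2, .inr x ∈ A none from ⟨h 0, h 1⟩
  intro x
  by_contra hx
  obtain ⟨i, hi⟩ := hpart.exists_mem_s8 (.inr x)
  obtain ⟨i, rfl⟩ := Option.ne_none_iff_exists'.1 fun h => hx (h ▸ hi)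
  have h3kT : 3 * k * T ≤ bundleVal (vStrong k T b none) (A none) := by
    refine le_trans ?_ hrich
    have hsum_ge :=
      three_mul_sq_le_sum_bundleVal_vStrong_some hb' hT.le (A := fun j => A (some j)) hi
    calc (3 * k * T : ℚ) = 1 / k * (3 * k ^ 2 * T) := by field_simp
      _ ≤ _ := by gcongr
  have h4kT := four_mul_le_bundleVal_vStrong_none (by omega) hT hx h3kT
  obtain ⟨j, hj⟩ := exists_toRight_eq_empty (A := fun j : Fin k => A (some j))
    (fun _ _ hij => hpart.1 _ _ (Option.some_injective _ |>.ne hij))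
    (by simp only [Fintype.card_fin]; omega)
  have hA0 : A none ≠ ∅ := fun h => by
    rw [h, bundleVal, sum_empty] at h4kT
    linarith
  obtain ⟨g, hg, hEQ1⟩ := heq1 none (some j) hA0
  rw [bundleVal_erase _ hg] at hEQ1
  have hAj := bundleVal_vStrong_some_le hb' hsum j hj
  have hg_le := vStrong_none_le (b := b) (by omega) hT.le g
  linarith
end

section
/- In the 3-agent, 3-good instance with valuations v_1 = (9, 6, 6), v_2 = (1, 10, 10), v_3 = (7, 7, 7), there is no EQ1 allocation A in which agent 1 is richest, i.e., satisfying v_1(A_1) >= v_2(A_2) and v_1(A_1) >= v_3(A_3). -/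
/-!
If some agent's bundle is empty, EQ1 against that agent forces every bundle to lose all
its value after removing one good, so with positive valuations every bundle has at most one
good; then at most two of the three goods are allocated. Hence each agent receives exactly one
good. Agent 3 values every good at 7, so agent 1 can only be richest with good 1 (worth 9 to
her); but then agent 2 holds good 2 or 3, worth 10 to him.
-/

open Finset

/-- The instance of Fig. 5. -/
def vFig5 : Fin 3 → Fin 3 → ℚ := ![![9, 6, 6], ![1, 10, 10], ![7, 7, 7]]

namespace isPartition

variable {ι γ : Type*} [Fintype ι] [Fintype γ] [DecidableEq γ] {A : ι → Finset γ}

theorem sum_card_s9 (hA : isPartition A) : ∑ i, #(A i) = Fintype.card γ := by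
  rw [← card_univ, ← hA.2, card_biUnion]
  exact fun i _ j _ hij => hA.1 i j hij

theorem card_eq_one_of_nonempty (hA : isPartition A) (hcard : Fintype.card γ ≤ Fintype.card ι)
    (hne : ∀ i, (A i).Nonempty) (i : ι) : #(A i) = 1 := by
  have hle : ∀ i ∈ univ, 1 ≤ #(A i) := fun i _ => (hne i).card_pos
  have hsum : ∑ i, #(A i) ≤ ∑ _i : ι, 1 := by simpa [hA.sum_card_s9] using hcard
  exact ((sum_eq_sum_iff_of_le hle).1 (hsum.antisymm' (sum_le_sum hle)) i (mem_univ i)).symm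

end isPartition

namespace EQ1

variable {ι γ : Type*} [DecidableEq γ] {v : ι → γ → ℚ} {A : ι → Finset γ}

theorem card_le_one_of_eq_empty_s9 (hv : ∀ i g, 0 < v i g) (h : EQ1 v A) {j : ι}
    (hj : A j = ∅) (i : ι) : #(A i) ≤ 1 := by
  by_cases hi : A i = ∅
  · simp [hi]
  obtain ⟨g, hg, hle⟩ := h i j hi
  have herase : (A i).erase g = ∅ := by
    by_contra hne
    have hpos : 0 < bundleVal (v i) ((A i).erase g) :=
      sum_pos (fun g _ => hv i g) (nonempty_iff_ne_empty.2 hne)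
    rw [hj] at hle
    exact hpos.not_ge (hle.trans_eq sum_empty)
  have := card_erase_of_mem hg
  rw [herase, card_empty] at this
  omega

theorem nonempty_of_isPartition [Fintype ι] [Fintype γ] (hv : ∀ i g, 0 < v i g) (h : EQ1 v A)
    (hA : isPartition A) (hcard : Fintype.card ι ≤ Fintype.card γ) (j : ι) :
    (A j).Nonempty := by
  rw [nonempty_iff_ne_empty]
  intro hj
  have hlt : ∑ i, #(A i) < ∑ _i : ι, 1 :=
    sum_lt_sum (fun i _ => h.card_le_one_of_eq_empty_s9 hv hj i) ⟨j, mem_univ j, by simp [hj]⟩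
  simp only [hA.sum_card_s9, sum_const, card_univ, smul_eq_mul, mul_one] at hlt
  omega

end EQ1

theorem vFig5_pos : ∀ i g, 0 < vFig5 i g := by
  decide

theorem vFig5_not_richest_of_ne (x y z : Fin 3) (hxy : x ≠ y)
    (h1 : vFig5 0 x ≥ vFig5 1 y) (h2 : vFig5 0 x ≥ vFig5 2 z) : False := by
  fin_cases x <;> fin_cases y <;> fin_cases z <;> simp_all [vFig5] <;> norm_num at *

/-- in the instance of Fig. 5, there is no EQ1 allocation in
which agent 1 is richest. -/
theorem stmt9 :
    ¬ ∃ A : Fin 3 → Finset (Fin 3),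
        isPartition A ∧ EQ1 vFig5 A ∧
        bundleVal (vFig5 0) (A 0) ≥ bundleVal (vFig5 1) (A 1) ∧
        bundleVal (vFig5 0) (A 0) ≥ bundleVal (vFig5 2) (A 2) := by
  rintro ⟨A, hA, hEQ1, h1, h2⟩
  have hne := hEQ1.nonempty_of_isPartition vFig5_pos hA le_rfl
  choose a ha using fun i => card_eq_one.1 (hA.card_eq_one_of_nonempty le_rfl hne i)
  have h01 : a 0 ≠ a 1 := by
    intro h
    have := hA.1 0 1 (by decide)
    rw [ha, ha, h, disjoint_self] at this
    exact singleton_ne_empty _ this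
  simp only [ha, bundleVal, sum_singleton] at h1 h2
  exact vFig5_not_richest_of_ne _ _ _ h01 h1 h2
end

section
/- Consider the dynamic programming table T for two agents defined by: T(0, w_1, w_2, h_1, h_2) = 1 iff (w_1,w_2,h_1,h_2) = (0,0,0,0), and T(t, w_1, w_2, h_1, h_2) = 1 iff one of: (C1a) h_1 = v_1(g_t) and T(t-1, w_1 - v_1(g_t), w_2, h', h_2) = 1 for some h' <= h_1; (C1b) h_1 > v_1(g_t) and T(t-1, w_1 - v_1(g_t), w_2, h_1, h_2) = 1; (C2a) h_2 = v_2(g_t) and T(t-1, w_1, w_2 - v_2(g_t), h_1, h') = 1 for some h' <= h_2; (C2b) h_2 > v_2(g_t) and T(t-1, w_1, w_2 - v_2(g_t), h_1, h_2) = 1. Then T(t, w_1, w_2, h_1, h_2) = 1 if and only if there exists an allocation A = (A_1, A_2) of the first t goods with v_i(A_i) = w_i and max_{g in A_i} v_i(g) = h_i for i in {1, 2} (with the max taken to be 0 on the empty set). -/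
/-!
The last good `g_t` goes to one of the two agents; removing it from that bundle leaves an
allocation of the first `t - 1` goods in which the agent's value drops by `v(g_t)` and the
agent's old maximum `h'` satisfies `max (v(g_t), h') = h`. Splitting this equation into
`h = v(g_t)` (with any `h' ≤ h`) and `h > v(g_t)` (with `h' = h`) gives exactly the four
cases of the recurrence, so the table is correct by induction on `t`.
-/

open Finset

/-- The dynamic-programming table for two agents: `Tbl m v₁ v₂ t w₁ w₂ h₁ h₂`
records whether there is an allocation of the first `t` goods in which agent
`i` has total value `wᵢ` and maximum single-good value `hᵢ`.  The subtractions
`wᵢ - vᵢ(g_t)` are guarded (`vᵢ(g_t) ≤ wᵢ`) so that they are genuine integer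
subtractions. -/
def Tbl (m : ℕ) (v₁ v₂ : Fin m → ℕ) : ℕ → ℕ → ℕ → ℕ → ℕ → Prop
  | 0, w₁, w₂, h₁, h₂ => w₁ = 0 ∧ w₂ = 0 ∧ h₁ = 0 ∧ h₂ = 0
  | t + 1, w₁, w₂, h₁, h₂ =>
      ∃ ht : t < m,
        -- (C1a)
        (h₁ = v₁ ⟨t, ht⟩ ∧ v₁ ⟨t, ht⟩ ≤ w₁ ∧
          ∃ h' ≤ h₁, Tbl m v₁ v₂ t (w₁ - v₁ ⟨t, ht⟩) w₂ h' h₂) ∨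
        -- (C1b)
        (h₁ > v₁ ⟨t, ht⟩ ∧ v₁ ⟨t, ht⟩ ≤ w₁ ∧
          Tbl m v₁ v₂ t (w₁ - v₁ ⟨t, ht⟩) w₂ h₁ h₂) ∨
        -- (C2a)
        (h₂ = v₂ ⟨t, ht⟩ ∧ v₂ ⟨t, ht⟩ ≤ w₂ ∧
          ∃ h' ≤ h₂, Tbl m v₁ v₂ t w₁ (w₂ - v₂ ⟨t, ht⟩) h₁ h') ∨
        -- (C2b)
        (h₂ > v₂ ⟨t, ht⟩ ∧ v₂ ⟨t, ht⟩ ≤ w₂ ∧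
          Tbl m v₁ v₂ t w₁ (w₂ - v₂ ⟨t, ht⟩) h₁ h₂)

lemma Nat.exists_add_sup_eq_iff {P : ℕ → ℕ → Prop} {a W H : ℕ} :
    (∃ w h, P w h ∧ a + w = W ∧ a ⊔ h = H) ↔
      (H = a ∧ a ≤ W ∧ ∃ h ≤ H, P (W - a) h) ∨ (H > a ∧ a ≤ W ∧ P (W - a) H) := by
  constructor
  · rintro ⟨w, h, hP, rfl, rfl⟩
    rw [Nat.add_sub_cancel_left]
    rcases le_or_gt h a with hle | hlt
    · exact .inl ⟨sup_eq_left.2 hle, Nat.le_add_right a w, h, le_sup_right, hP⟩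
    · rw [sup_eq_right.2 hlt.le]
      exact .inr ⟨hlt, Nat.le_add_right a w, hP⟩
  · rintro (⟨rfl, haW, h, hh, hP⟩ | ⟨hlt, haW, hP⟩)
    · exact ⟨_, h, hP, by omega, sup_eq_left.2 hh⟩
    · exact ⟨_, H, hP, by omega, sup_eq_right.2 hlt.le⟩

section Partition

variable {α : Type*} [DecidableEq α] {S A₁ A₂ : Finset α} {g : α}

lemma disjoint_erase_union_eq_of_union_eq_insert (hg : g ∉ S) (hd : Disjoint A₁ A₂)
    (hu : A₁ ∪ A₂ = insert g S) (hgA : g ∈ A₁) :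
    Disjoint (A₁.erase g) A₂ ∧ A₁.erase g ∪ A₂ = S := by
  refine ⟨disjoint_of_subset_left (erase_subset _ _) hd, ?_⟩
  rw [← erase_eq_of_notMem (disjoint_left.1 hd hgA), ← erase_union_distrib, hu,
    erase_insert hg]

lemma exists_partition_insert_iff (hg : g ∉ S) {P : Finset α → Finset α → Prop} :
    (∃ A₁ A₂, Disjoint A₁ A₂ ∧ A₁ ∪ A₂ = insert g S ∧ P A₁ A₂) ↔
      ∃ B₁ B₂, Disjoint B₁ B₂ ∧ B₁ ∪ B₂ = S ∧ (P (insert g B₁) B₂ ∨ P B₁ (insert g B₂)) := by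
  constructor
  · rintro ⟨A₁, A₂, hd, hu, hP⟩
    rcases mem_union.1 (hu ▸ mem_insert_self g S) with hgA | hgA
    · obtain ⟨hd', hu'⟩ := disjoint_erase_union_eq_of_union_eq_insert hg hd hu hgA
      exact ⟨_, _, hd', hu', .inl (by rwa [insert_erase hgA])⟩
    · obtain ⟨hd', hu'⟩ := disjoint_erase_union_eq_of_union_eq_insert hg hd.symm
        (union_comm A₁ A₂ ▸ hu) hgA
      exact ⟨_, _, hd'.symm, union_comm A₁ _ ▸ hu', .inr (by rwa [insert_erase hgA])⟩
  · rintro ⟨B₁, B₂, hd, rfl, hP | hP⟩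
    · exact ⟨insert g B₁, B₂, disjoint_insert_left.2 ⟨fun h => hg (mem_union_right _ h), hd⟩,
        insert_union .., hP⟩
    · exact ⟨B₁, insert g B₂, disjoint_insert_right.2 ⟨fun h => hg (mem_union_left _ h), hd⟩,
        union_insert .., hP⟩

end Partition

section Allocation

variable {α : Type*} [DecidableEq α] (v₁ v₂ : α → ℕ)

def HasAllocation (S : Finset α) (w₁ w₂ h₁ h₂ : ℕ) : Prop :=
  ∃ A₁ A₂ : Finset α, Disjoint A₁ A₂ ∧ A₁ ∪ A₂ = S ∧
    ∑ g ∈ A₁, v₁ g = w₁ ∧ ∑ g ∈ A₂, v₂ g = w₂ ∧ A₁.sup v₁ = h₁ ∧ A₂.sup v₂ = h₂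

variable {v₁ v₂}

lemma hasAllocation_empty_iff {w₁ w₂ h₁ h₂ : ℕ} :
    HasAllocation v₁ v₂ ∅ w₁ w₂ h₁ h₂ ↔ w₁ = 0 ∧ w₂ = 0 ∧ h₁ = 0 ∧ h₂ = 0 := by
  constructor
  · rintro ⟨A₁, A₂, -, hu, rfl, rfl, rfl, rfl⟩
    obtain ⟨rfl, rfl⟩ := union_eq_empty.1 hu
    simp
  · rintro ⟨rfl, rfl, rfl, rfl⟩
    exact ⟨∅, ∅, by simp⟩

lemma hasAllocation_insert_iff {S : Finset α} {g : α} (hg : g ∉ S) {w₁ w₂ h₁ h₂ : ℕ} :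
    HasAllocation v₁ v₂ (insert g S) w₁ w₂ h₁ h₂ ↔
      (∃ w h, HasAllocation v₁ v₂ S w w₂ h h₂ ∧ v₁ g + w = w₁ ∧ v₁ g ⊔ h = h₁) ∨
      (∃ w h, HasAllocation v₁ v₂ S w₁ w h₁ h ∧ v₂ g + w = w₂ ∧ v₂ g ⊔ h = h₂) := by
  unfold HasAllocation
  rw [exists_partition_insert_iff hg]
  constructor
  · rintro ⟨B₁, B₂, hd, rfl, ⟨hs₁, hs₂, hm₁, hm₂⟩ | ⟨hs₁, hs₂, hm₁, hm₂⟩⟩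
    · have hgB : g ∉ B₁ := fun h => hg (mem_union_left _ h)
      exact .inl ⟨_, _, ⟨B₁, B₂, hd, rfl, rfl, hs₂, rfl, hm₂⟩,
        by rw [← hs₁, sum_insert hgB], by rw [← hm₁, sup_insert]⟩
    · have hgB : g ∉ B₂ := fun h => hg (mem_union_right _ h)
      exact .inr ⟨_, _, ⟨B₁, B₂, hd, rfl, hs₁, rfl, hm₁, rfl⟩,
        by rw [← hs₂, sum_insert hgB], by rw [← hm₂, sup_insert]⟩
  · rintro (⟨w, h, ⟨B₁, B₂, hd, rfl, rfl, rfl, rfl, rfl⟩, rfl, rfl⟩ |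
        ⟨w, h, ⟨B₁, B₂, hd, rfl, rfl, rfl, rfl, rfl⟩, rfl, rfl⟩)
    · have hgB : g ∉ B₁ := fun h => hg (mem_union_left _ h)
      exact ⟨B₁, B₂, hd, rfl, .inl ⟨sum_insert hgB, rfl, sup_insert .., rfl⟩⟩
    · have hgB : g ∉ B₂ := fun h => hg (mem_union_right _ h)
      exact ⟨B₁, B₂, hd, rfl, .inr ⟨rfl, sum_insert hgB, rfl, sup_insert ..⟩⟩

end Allocation

lemma Fin.filter_val_lt_succ {m t : ℕ} (ht : t < m) :
    univ.filter (fun g : Fin m => (g : ℕ) < t + 1) =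
      insert ⟨t, ht⟩ (univ.filter (fun g : Fin m => (g : ℕ) < t)) := by
  ext g
  simp only [mem_filter, mem_univ, true_and, mem_insert, Fin.ext_iff]
  omega

theorem stmt15_general (m : ℕ) (v₁ v₂ : Fin m → ℕ)
    (t : ℕ) (ht : t ≤ m) (w₁ w₂ h₁ h₂ : ℕ) :
    Tbl m v₁ v₂ t w₁ w₂ h₁ h₂ ↔
      ∃ A₁ A₂ : Finset (Fin m),
        Disjoint A₁ A₂ ∧
        A₁ ∪ A₂ = Finset.univ.filter (fun g : Fin m => (g : ℕ) < t) ∧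
        ∑ g ∈ A₁, v₁ g = w₁ ∧ ∑ g ∈ A₂, v₂ g = w₂ ∧
        A₁.sup v₁ = h₁ ∧ A₂.sup v₂ = h₂ := by
  change _ ↔ HasAllocation v₁ v₂ _ w₁ w₂ h₁ h₂
  induction t generalizing w₁ w₂ h₁ h₂ with
  | zero => simp [Tbl, hasAllocation_empty_iff]
  | succ t ih =>
    have htm : t < m := ht
    simp only [Tbl, ih htm.le]
    rw [Fin.filter_val_lt_succ htm, hasAllocation_insert_iff (by simp),
      Nat.exists_add_sup_eq_iff, Nat.exists_add_sup_eq_iff]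
    exact ⟨fun ⟨_, h⟩ => or_assoc.2 h, fun h => ⟨htm, or_assoc.1 h⟩⟩

/-- the table is filled in correctly: `Tbl m v₁ v₂ t w₁ w₂ h₁ h₂`
holds iff there is an allocation `(A₁, A₂)` of the first `t` goods with
`vᵢ(Aᵢ) = wᵢ` and `max_{g ∈ Aᵢ} vᵢ(g) = hᵢ` (the max being `0` on `∅`). -/
theorem stmt15 (m : ℕ) (v₁ v₂ : Fin m → ℕ)
    (hv : ∀ g, 0 < v₁ g ∧ 0 < v₂ g)
    (t : ℕ) (ht : t ≤ m) (w₁ w₂ h₁ h₂ : ℕ) :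
    Tbl m v₁ v₂ t w₁ w₂ h₁ h₂ ↔
      ∃ A₁ A₂ : Finset (Fin m),
        Disjoint A₁ A₂ ∧
        A₁ ∪ A₂ = Finset.univ.filter (fun g : Fin m => (g : ℕ) < t) ∧
        ∑ g ∈ A₁, v₁ g = w₁ ∧ ∑ g ∈ A₂, v₂ g = w₂ ∧
        A₁.sup v₁ = h₁ ∧ A₂.sup v₂ = h₂ :=
  stmt15_general m v₁ v₂ t ht w₁ w₂ h₁ h₂
end
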